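/- Optimal feedback law for the QDP (Lemma 3.4(ii)): Assume SOSC. Then the QDP has a unique global minimizer (p*, q*), and for every k = 0,…,N−1: q*_k = P_k p*_k + W_k⁻¹B_kᵀ Σ_{i=k+1}^{N−1} (M_i^{k+1})ᵀ l_i + W_k⁻¹B_kᵀ Σ_{i=k+1}^{N−1} (V_i^{k+1})ᵀ C_i l_i − W_k⁻¹B_kᵀK_{k+1}C_k l_k − W_k⁻¹D_{k2}ᵀ l_k. -/

import Mathlib

/-
Backward dynamic programming. Let `V_k(x) = xᵀ K_k x + 2 g_kᵀ x + c_k`. Completing the square in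
the control turns "stage cost at `(x, u)` plus `V_{k+1}` of the next state" into
`(u - φ_k x)ᵀ W_k (u - φ_k x) + V_k(x)` with an affine feedback `φ_k x = P_k x + f_k`, so
along every feasible trajectory `J(p, q) = Σ_k (q_k - φ_k p_k)ᵀ W_k (q_k - φ_k p_k) + V_0(l_{-1})`.
SOSC makes each `W_k` positive definite, by backward induction: the trajectory that is zero up to
time `k`, applies `u` at time `k` and follows `q_i = P_i p_i` afterwards costs exactly `uᵀ W_k u`.
Hence `J` is minimal exactly on the closed loop `q_k = φ_k p_k`.
-/

open Matrix BigOperators Finset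

/-- Ordered product of matrices: `prodE E i len = E (i+len-1) * ⋯ * E (i+1) * E i`,
with the empty product equal to the identity. -/
def prodE {n : ℕ} (E : ℕ → Matrix (Fin n) (Fin n) ℝ) : ℕ → ℕ → Matrix (Fin n) (Fin n) ℝ
  | _, 0 => 1
  | i, (len + 1) => E (i + len) * prodE E i len

/-- `V_i^k = -K_{i+1} (E_i E_{i-1} ⋯ E_k)`. -/
noncomputable def Vmat {nx : ℕ} (K E : ℕ → Matrix (Fin nx) (Fin nx) ℝ) (i k : ℕ) :
    Matrix (Fin nx) (Fin nx) ℝ :=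
  -(K (i + 1) * prodE E k (i + 1 - k))

/-- `M_i^k = -(D_{i1} + D_{i2} P_i) (E_{i-1} E_{i-2} ⋯ E_k)`. -/
noncomputable def Mmat {nx nu nd : ℕ} (D1 : ℕ → Matrix (Fin nd) (Fin nx) ℝ)
    (D2 : ℕ → Matrix (Fin nd) (Fin nu) ℝ) (P : ℕ → Matrix (Fin nu) (Fin nx) ℝ)
    (E : ℕ → Matrix (Fin nx) (Fin nx) ℝ) (i k : ℕ) : Matrix (Fin nd) (Fin nx) ℝ :=
  -((D1 i + D2 i * P i) * prodE E k (i - k))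

/-- Feasibility for the QDP constraints. -/
def Feas {nx nu nd : ℕ} (N : ℕ)
    (A : ℕ → Matrix (Fin nx) (Fin nx) ℝ) (B : ℕ → Matrix (Fin nx) (Fin nu) ℝ)
    (C : ℕ → Matrix (Fin nx) (Fin nd) ℝ) (lm1 : Fin nx → ℝ) (l : ℕ → Fin nd → ℝ)
    (p : ℕ → Fin nx → ℝ) (q : ℕ → Fin nu → ℝ) : Prop :=
  p 0 = lm1 ∧ ∀ k < N, p (k + 1) = A k *ᵥ p k + B k *ᵥ q k + C k *ᵥ l k

/-- The QDP objective `J(p,q)`. -/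
noncomputable def qdpObj {nx nu nd : ℕ} (N : ℕ)
    (Q : ℕ → Matrix (Fin nx) (Fin nx) ℝ) (R : ℕ → Matrix (Fin nu) (Fin nu) ℝ)
    (S : ℕ → Matrix (Fin nu) (Fin nx) ℝ) (D1 : ℕ → Matrix (Fin nd) (Fin nx) ℝ)
    (D2 : ℕ → Matrix (Fin nd) (Fin nu) ℝ) (l : ℕ → Fin nd → ℝ)
    (p : ℕ → Fin nx → ℝ) (q : ℕ → Fin nu → ℝ) : ℝ :=
  (∑ k ∈ range N,
      (p k ⬝ᵥ Q k *ᵥ p k + 2 * (q k ⬝ᵥ S k *ᵥ p k) + q k ⬝ᵥ R k *ᵥ q k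
        + 2 * (l k ⬝ᵥ D1 k *ᵥ p k) + 2 * (l k ⬝ᵥ D2 k *ᵥ q k)))
    + p N ⬝ᵥ Q N *ᵥ p N

/-- SOSC: the homogeneous quadratic objective is positive on every nonzero
feasible homogeneous trajectory. -/
def SOSC {nx nu : ℕ} (N : ℕ)
    (A : ℕ → Matrix (Fin nx) (Fin nx) ℝ) (B : ℕ → Matrix (Fin nx) (Fin nu) ℝ)
    (Q : ℕ → Matrix (Fin nx) (Fin nx) ℝ) (R : ℕ → Matrix (Fin nu) (Fin nu) ℝ)
    (S : ℕ → Matrix (Fin nu) (Fin nx) ℝ) : Prop :=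
  ∀ (p : ℕ → Fin nx → ℝ) (q : ℕ → Fin nu → ℝ),
    p 0 = 0 → (∀ k < N, p (k + 1) = A k *ᵥ p k + B k *ᵥ q k) →
    ¬ ((∀ k ≤ N, p k = 0) ∧ (∀ k < N, q k = 0)) →
    0 < (∑ k ∈ range N,
        (p k ⬝ᵥ Q k *ᵥ p k + 2 * (q k ⬝ᵥ S k *ᵥ p k) + q k ⬝ᵥ R k *ᵥ q k))
      + p N ⬝ᵥ Q N *ᵥ p N

namespace Matrix

variable {m n d : Type*} [Fintype n]

lemma IsSymm.dotProduct_mulVec_comm {S : Matrix n n ℝ} (hS : S.IsSymm) (x y : n → ℝ) :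
    x ⬝ᵥ S *ᵥ y = y ⬝ᵥ S *ᵥ x := by
  rw [← dotProduct_transpose_mulVec, hS.eq]

lemma IsSymm.add_dotProduct_mulVec_add {S : Matrix n n ℝ} (hS : S.IsSymm) (x y : n → ℝ) :
    (x + y) ⬝ᵥ S *ᵥ (x + y) = x ⬝ᵥ S *ᵥ x + 2 * (x ⬝ᵥ S *ᵥ y) + y ⬝ᵥ S *ᵥ y := by
  rw [mulVec_add, dotProduct_add, add_dotProduct, add_dotProduct, hS.dotProduct_mulVec_comm y x]
  ring

lemma IsSymm.transpose_mul_mul {S : Matrix n n ℝ} (hS : S.IsSymm) (M : Matrix n m ℝ) :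
    (Mᵀ * S * M).IsSymm := by
  simp [IsSymm, transpose_mul, hS.eq, Matrix.mul_assoc]

variable [Fintype m] [Fintype d]

lemma mulVec_dotProduct_mulVec_mulVec (M : Matrix n m ℝ) (S : Matrix n n ℝ) (M' : Matrix n d ℝ)
    (x : m → ℝ) (y : d → ℝ) : (M *ᵥ x) ⬝ᵥ S *ᵥ (M' *ᵥ y) = x ⬝ᵥ (Mᵀ * S * M') *ᵥ y := by
  rw [← mulVec_mulVec, ← mulVec_mulVec, dotProduct_comm, dotProduct_transpose_mulVec,
    dotProduct_comm]

lemma sum_dotProduct_mulVec_nonneg {ι : Type*} {s : Finset ι} {W : ι → Matrix m m ℝ}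
    (hW : ∀ i ∈ s, (W i).PosSemidef) (r : ι → m → ℝ) : 0 ≤ ∑ i ∈ s, r i ⬝ᵥ W i *ᵥ r i :=
  sum_nonneg fun i hi => by simpa using (hW i hi).dotProduct_mulVec_nonneg (r i)

lemma sum_dotProduct_mulVec_eq_zero_iff {ι : Type*} {s : Finset ι} {W : ι → Matrix m m ℝ}
    (hW : ∀ i ∈ s, (W i).PosDef) (r : ι → m → ℝ) :
    ∑ i ∈ s, r i ⬝ᵥ W i *ᵥ r i = 0 ↔ ∀ i ∈ s, r i = 0 := by
  rw [sum_eq_zero_iff_of_nonneg fun i hi => by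
    simpa using (hW i hi).posSemidef.dotProduct_mulVec_nonneg (r i)]
  refine forall₂_congr fun i hi => ⟨fun h => ?_, fun h => by simp [h]⟩
  by_contra hr
  simpa [h] using (hW i hi).dotProduct_mulVec_pos hr

variable [DecidableEq m]

lemma IsSymm.complete_square {W : Matrix m m ℝ} (hW : W.IsSymm) (hWu : IsUnit W) (u z : m → ℝ) :
    u ⬝ᵥ W *ᵥ u + 2 * (u ⬝ᵥ z) = (u + W⁻¹ *ᵥ z) ⬝ᵥ W *ᵥ (u + W⁻¹ *ᵥ z) - z ⬝ᵥ W⁻¹ *ᵥ z := by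
  have hWW : W *ᵥ (W⁻¹ *ᵥ z) = z := by
    rw [mulVec_mulVec, mul_nonsing_inv _ ((isUnit_iff_isUnit_det W).mp hWu), one_mulVec]
  rw [hW.add_dotProduct_mulVec_add, hWW, dotProduct_comm (W⁻¹ *ᵥ z) z]
  ring

lemma riccati_step_complete_square {A Q K' K : Matrix n n ℝ} {B : Matrix n m ℝ} {R W : Matrix m m ℝ}
    {S P : Matrix m n ℝ} {D₁ : Matrix d n ℝ} {D₂ : Matrix d m ℝ}
    (hK' : K'.IsSymm) (hR : R.IsSymm) (hWu : IsUnit W)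
    (hW : W = R + Bᵀ * K' * B) (hP : P = -(W⁻¹ * (Bᵀ * K' * A + S)))
    (hK : K = Q + Aᵀ * K' * A - (Bᵀ * K' * A + S)ᵀ * W⁻¹ * (Bᵀ * K' * A + S))
    (x : n → ℝ) (u : m → ℝ) (l : d → ℝ) (w : n → ℝ) :
    x ⬝ᵥ Q *ᵥ x + 2 * (u ⬝ᵥ S *ᵥ x) + u ⬝ᵥ R *ᵥ u + 2 * (l ⬝ᵥ D₁ *ᵥ x)
        + 2 * (l ⬝ᵥ D₂ *ᵥ u)
        + ((A *ᵥ x + B *ᵥ u) ⬝ᵥ K' *ᵥ (A *ᵥ x + B *ᵥ u) + 2 * (w ⬝ᵥ (A *ᵥ x + B *ᵥ u)))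
      = (u - (P *ᵥ x - W⁻¹ *ᵥ (D₂ᵀ *ᵥ l + Bᵀ *ᵥ w))) ⬝ᵥ W *ᵥ
            (u - (P *ᵥ x - W⁻¹ *ᵥ (D₂ᵀ *ᵥ l + Bᵀ *ᵥ w)))
        + x ⬝ᵥ K *ᵥ x + 2 * (((D₁ + D₂ * P)ᵀ *ᵥ l + (A + B * P)ᵀ *ᵥ w) ⬝ᵥ x)
        - (D₂ᵀ *ᵥ l + Bᵀ *ᵥ w) ⬝ᵥ W⁻¹ *ᵥ (D₂ᵀ *ᵥ l + Bᵀ *ᵥ w) := by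
  set G := Bᵀ * K' * A + S with hG
  set h := D₂ᵀ *ᵥ l + Bᵀ *ᵥ w with hh
  have hWs : W.IsSymm := hW ▸ hR.add (hK'.transpose_mul_mul B)
  have hPt : Pᵀ = -(Gᵀ * W⁻¹) := by rw [hP, transpose_neg, transpose_mul, hWs.inv.eq]
  have hres : u - (P *ᵥ x - W⁻¹ *ᵥ h) = u + W⁻¹ *ᵥ (G *ᵥ x + h) := by
    rw [hP, neg_mulVec, ← mulVec_mulVec, mulVec_add W⁻¹ (G *ᵥ x) h]; abel
  have expand : x ⬝ᵥ Q *ᵥ x + 2 * (u ⬝ᵥ S *ᵥ x) + u ⬝ᵥ R *ᵥ u + 2 * (l ⬝ᵥ D₁ *ᵥ x)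
        + 2 * (l ⬝ᵥ D₂ *ᵥ u)
        + ((A *ᵥ x + B *ᵥ u) ⬝ᵥ K' *ᵥ (A *ᵥ x + B *ᵥ u) + 2 * (w ⬝ᵥ (A *ᵥ x + B *ᵥ u)))
      = u ⬝ᵥ W *ᵥ u + 2 * (u ⬝ᵥ (G *ᵥ x + h))
        + x ⬝ᵥ (Q + Aᵀ * K' * A) *ᵥ x + 2 * ((D₁ᵀ *ᵥ l + Aᵀ *ᵥ w) ⬝ᵥ x) := by
    rw [hK'.add_dotProduct_mulVec_add, hK'.dotProduct_mulVec_comm (A *ᵥ x) (B *ᵥ u),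
      mulVec_dotProduct_mulVec_mulVec, mulVec_dotProduct_mulVec_mulVec,
      mulVec_dotProduct_mulVec_mulVec, hW, hG, hh]
    simp only [add_mulVec, dotProduct_add, add_dotProduct, dotProduct_transpose_mulVec]
    rw [dotProduct_comm (D₁ᵀ *ᵥ l), dotProduct_comm (Aᵀ *ᵥ w), dotProduct_transpose_mulVec,
      dotProduct_transpose_mulVec]
    ring
  have square : (G *ᵥ x + h) ⬝ᵥ W⁻¹ *ᵥ (G *ᵥ x + h)
      = x ⬝ᵥ (Gᵀ * W⁻¹ * G) *ᵥ x - 2 * ((Pᵀ *ᵥ h) ⬝ᵥ x) + h ⬝ᵥ W⁻¹ *ᵥ h := by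
    rw [hWs.inv.add_dotProduct_mulVec_add, mulVec_dotProduct_mulVec_mulVec, hPt, neg_mulVec,
      neg_dotProduct, ← mulVec_mulVec h Gᵀ, dotProduct_comm (Gᵀ *ᵥ _), dotProduct_transpose_mulVec,
      dotProduct_comm (W⁻¹ *ᵥ h)]
    ring
  have linear : (D₁ + D₂ * P)ᵀ *ᵥ l + (A + B * P)ᵀ *ᵥ w = D₁ᵀ *ᵥ l + Aᵀ *ᵥ w + Pᵀ *ᵥ h := by
    simp only [hh, transpose_add, transpose_mul, add_mulVec, mulVec_add, ← mulVec_mulVec]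
    abel
  rw [expand, hWs.complete_square hWu, ← hres, square, hK, linear]
  simp only [sub_mulVec, add_mulVec, dotProduct_sub, dotProduct_add, add_dotProduct]
  ring

end Matrix

lemma prodE_succ {n : ℕ} (E : ℕ → Matrix (Fin n) (Fin n) ℝ) (k len : ℕ) :
    prodE E k (len + 1) = prodE E (k + 1) len * E k := by
  induction len with
  | zero => simp [prodE]
  | succ len ih =>
    rw [prodE, ih, prodE, Matrix.mul_assoc, Nat.add_right_comm k 1 len]
    rfl

section QDP

variable {nx nu nd : ℕ} (N : ℕ)
  (A : ℕ → Matrix (Fin nx) (Fin nx) ℝ) (B : ℕ → Matrix (Fin nx) (Fin nu) ℝ)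
  (C : ℕ → Matrix (Fin nx) (Fin nd) ℝ)
  (Q : ℕ → Matrix (Fin nx) (Fin nx) ℝ) (R : ℕ → Matrix (Fin nu) (Fin nu) ℝ)
  (S : ℕ → Matrix (Fin nu) (Fin nx) ℝ)
  (D1 : ℕ → Matrix (Fin nd) (Fin nx) ℝ) (D2 : ℕ → Matrix (Fin nd) (Fin nu) ℝ)
  (l : ℕ → Fin nd → ℝ)
  (K : ℕ → Matrix (Fin nx) (Fin nx) ℝ) (W : ℕ → Matrix (Fin nu) (Fin nu) ℝ)
  (P : ℕ → Matrix (Fin nu) (Fin nx) ℝ) (E : ℕ → Matrix (Fin nx) (Fin nx) ℝ)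

structure RiccatiRecursion : Prop where
  terminal : K N = Q N
  W_eq : ∀ k < N, W k = R k + (B k)ᵀ * K (k + 1) * B k
  P_eq : ∀ k < N, P k = -((W k)⁻¹ * ((B k)ᵀ * K (k + 1) * A k + S k))
  K_eq : ∀ k < N, K k =
    Q k + (A k)ᵀ * K (k + 1) * A k
      - ((B k)ᵀ * K (k + 1) * A k + S k)ᵀ * (W k)⁻¹ * ((B k)ᵀ * K (k + 1) * A k + S k)
  E_eq : ∀ k < N, E k = A k + B k * P k

def stageCost (k : ℕ) (x : Fin nx → ℝ) (u : Fin nu → ℝ) : ℝ :=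
  x ⬝ᵥ Q k *ᵥ x + 2 * (u ⬝ᵥ S k *ᵥ x) + u ⬝ᵥ R k *ᵥ u
    + 2 * (l k ⬝ᵥ D1 k *ᵥ x) + 2 * (l k ⬝ᵥ D2 k *ᵥ u)

-- The linear coefficient `g_k` of the value function, in the closed form (through `M` and `V`)
-- in which it enters the feedback formula.
noncomputable def valueLin (k : ℕ) : Fin nx → ℝ :=
  -∑ i ∈ Ico k N, ((Mmat D1 D2 P E i k)ᵀ *ᵥ l i + ((Vmat K E i k)ᵀ * C i) *ᵥ l i)

noncomputable def controlLin (k : ℕ) : Fin nu → ℝ :=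
  (D2 k)ᵀ *ᵥ l k + (B k)ᵀ *ᵥ (K (k + 1) *ᵥ (C k *ᵥ l k) + valueLin N C D1 D2 l K P E (k + 1))

noncomputable def feedforward (k : ℕ) : Fin nu → ℝ :=
  -((W k)⁻¹ *ᵥ controlLin N B C D1 D2 l K P E k)

noncomputable def valueConst (k : ℕ) : ℝ :=
  ∑ i ∈ Ico k N,
    ((C i *ᵥ l i) ⬝ᵥ K (i + 1) *ᵥ (C i *ᵥ l i)
      + 2 * (valueLin N C D1 D2 l K P E (i + 1) ⬝ᵥ (C i *ᵥ l i))
      - controlLin N B C D1 D2 l K P E i ⬝ᵥ (W i)⁻¹ *ᵥ controlLin N B C D1 D2 l K P E i)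

noncomputable def valueFn (k : ℕ) (x : Fin nx → ℝ) : ℝ :=
  x ⬝ᵥ K k *ᵥ x + 2 * (valueLin N C D1 D2 l K P E k ⬝ᵥ x) + valueConst N B C D1 D2 l K W P E k

def closedLoop (φ : ℕ → (Fin nx → ℝ) → Fin nu → ℝ) (x₀ : Fin nx → ℝ) : ℕ → Fin nx → ℝ
  | 0 => x₀
  | k + 1 => A k *ᵥ closedLoop φ x₀ k + B k *ᵥ φ k (closedLoop φ x₀ k) + C k *ᵥ l k

variable {N A B C Q R S D1 D2 l K W P E}

lemma feas_closedLoop (φ : ℕ → (Fin nx → ℝ) → Fin nu → ℝ) (x₀ : Fin nx → ℝ) :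
    Feas N A B C x₀ l (closedLoop A B C l φ x₀) (fun k => φ k (closedLoop A B C l φ x₀ k)) :=
  ⟨rfl, fun _ _ => rfl⟩

lemma Feas.eq_closedLoop {x₀ : Fin nx → ℝ} {p : ℕ → Fin nx → ℝ} {q : ℕ → Fin nu → ℝ}
    (hf : Feas N A B C x₀ l p q) {φ : ℕ → (Fin nx → ℝ) → Fin nu → ℝ}
    (hq : ∀ k < N, q k = φ k (p k)) : ∀ k ≤ N, p k = closedLoop A B C l φ x₀ k
  | 0, _ => hf.1
  | k + 1, hk => by
    rw [hf.2 k hk, hq k hk, hf.eq_closedLoop hq k (by omega), closedLoop]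

lemma Mmat_self (k : ℕ) : Mmat D1 D2 P E k k = -(D1 k + D2 k * P k) := by
  simp [Mmat, prodE]

lemma Mmat_of_lt {i k : ℕ} (hki : k < i) :
    Mmat D1 D2 P E i k = Mmat D1 D2 P E i (k + 1) * E k := by
  rw [Mmat, Mmat, show i - k = i - (k + 1) + 1 by omega, prodE_succ, ← Matrix.mul_assoc,
    Matrix.neg_mul]

lemma Vmat_self (k : ℕ) : Vmat K E k k = -(K (k + 1) * E k) := by
  simp [Vmat, prodE]

lemma Vmat_of_lt {i k : ℕ} (hki : k < i) : Vmat K E i k = Vmat K E i (k + 1) * E k := by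
  rw [Vmat, Vmat, show i + 1 - k = i + 1 - (k + 1) + 1 by omega, prodE_succ,
    ← Matrix.mul_assoc, Matrix.neg_mul]

lemma valueLin_self : valueLin N C D1 D2 l K P E N = 0 := by
  simp [valueLin]

lemma valueLin_of_lt {k : ℕ} (hk : k < N) (hK : (K (k + 1)).IsSymm) :
    valueLin N C D1 D2 l K P E k = (D1 k + D2 k * P k)ᵀ *ᵥ l k
      + (E k)ᵀ *ᵥ (K (k + 1) *ᵥ (C k *ᵥ l k) + valueLin N C D1 D2 l K P E (k + 1)) := by
  have htail : ∀ i ∈ Ico (k + 1) N,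
      (Mmat D1 D2 P E i k)ᵀ *ᵥ l i + ((Vmat K E i k)ᵀ * C i) *ᵥ l i
        = (E k)ᵀ *ᵥ
            ((Mmat D1 D2 P E i (k + 1))ᵀ *ᵥ l i + ((Vmat K E i (k + 1))ᵀ * C i) *ᵥ l i) := by
    intro i hi
    rw [Mmat_of_lt (mem_Ico.mp hi).1, Vmat_of_lt (mem_Ico.mp hi).1]
    simp only [transpose_mul, mulVec_add, mulVec_mulVec, Matrix.mul_assoc]
  rw [valueLin, valueLin, sum_eq_sum_Ico_succ_bot hk, sum_congr rfl htail, ← mulVec_sum,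
    Mmat_self, Vmat_self]
  simp only [transpose_neg, transpose_mul, hK.eq, Matrix.neg_mul, neg_mulVec, mulVec_add,
    mulVec_neg, ← mulVec_mulVec]
  abel

lemma valueConst_self : valueConst N B C D1 D2 l K W P E N = 0 := by
  simp [valueConst]

lemma valueConst_of_lt {k : ℕ} (hk : k < N) :
    valueConst N B C D1 D2 l K W P E k =
      (C k *ᵥ l k) ⬝ᵥ K (k + 1) *ᵥ (C k *ᵥ l k)
        + 2 * (valueLin N C D1 D2 l K P E (k + 1) ⬝ᵥ (C k *ᵥ l k))
        - controlLin N B C D1 D2 l K P E k ⬝ᵥ (W k)⁻¹ *ᵥ controlLin N B C D1 D2 l K P E k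
      + valueConst N B C D1 D2 l K W P E (k + 1) :=
  sum_eq_sum_Ico_succ_bot hk _

lemma feedforward_eq (k : ℕ) :
    feedforward N B C D1 D2 l K W P E k
      = ((W k)⁻¹ * (B k)ᵀ) *ᵥ (∑ i ∈ Ico (k + 1) N, (Mmat D1 D2 P E i (k + 1))ᵀ *ᵥ l i)
        + ((W k)⁻¹ * (B k)ᵀ) *ᵥ (∑ i ∈ Ico (k + 1) N, ((Vmat K E i (k + 1))ᵀ * C i) *ᵥ l i)
        - ((W k)⁻¹ * (B k)ᵀ * K (k + 1) * C k) *ᵥ l k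
        - ((W k)⁻¹ * (D2 k)ᵀ) *ᵥ l k := by
  simp only [feedforward, controlLin, valueLin, sum_add_distrib, mulVec_add, mulVec_neg,
    ← mulVec_mulVec]
  abel

namespace RiccatiRecursion

lemma isSymm_W (hric : RiccatiRecursion N A B Q R S K W P E) {k : ℕ} (hk : k < N)
    (hR : (R k).IsSymm) (hK : (K (k + 1)).IsSymm) : (W k).IsSymm :=
  hric.W_eq k hk ▸ hR.add (hK.transpose_mul_mul (B k))

lemma isSymm_K (hric : RiccatiRecursion N A B Q R S K W P E) (hQ : ∀ k ≤ N, (Q k).IsSymm)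
    (hR : ∀ k < N, (R k).IsSymm) {k : ℕ} (hk : k ≤ N) : (K k).IsSymm := by
  induction hk using Nat.decreasingInduction with
  | self => exact hric.terminal ▸ hQ N le_rfl
  | of_succ k hk hK =>
    rw [hric.K_eq k hk]
    exact ((hQ k hk.le).add (hK.transpose_mul_mul _)).sub
      ((hric.isSymm_W hk (hR k hk) hK).inv.transpose_mul_mul _)

lemma stageCost_add_valueFn (hric : RiccatiRecursion N A B Q R S K W P E) {k : ℕ} (hk : k < N)
    (hR : (R k).IsSymm) (hK : (K (k + 1)).IsSymm) (hW : IsUnit (W k))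
    (x : Fin nx → ℝ) (u : Fin nu → ℝ) :
    stageCost Q R S D1 D2 l k x u
        + valueFn N B C D1 D2 l K W P E (k + 1) (A k *ᵥ x + B k *ᵥ u + C k *ᵥ l k)
      = (u - (P k *ᵥ x + feedforward N B C D1 D2 l K W P E k)) ⬝ᵥ W k *ᵥ
            (u - (P k *ᵥ x + feedforward N B C D1 D2 l K W P E k))
        + valueFn N B C D1 D2 l K W P E k x := by
  set g := valueLin N C D1 D2 l K P E (k + 1)
  set c := C k *ᵥ l k
  have shift : valueFn N B C D1 D2 l K W P E (k + 1) (A k *ᵥ x + B k *ᵥ u + c)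
      = (A k *ᵥ x + B k *ᵥ u) ⬝ᵥ K (k + 1) *ᵥ (A k *ᵥ x + B k *ᵥ u)
          + 2 * ((K (k + 1) *ᵥ c + g) ⬝ᵥ (A k *ᵥ x + B k *ᵥ u))
        + valueFn N B C D1 D2 l K W P E (k + 1) c := by
    rw [valueFn, valueFn, hK.add_dotProduct_mulVec_add,
      dotProduct_comm (A k *ᵥ x + B k *ᵥ u) (K (k + 1) *ᵥ c), add_dotProduct _ g,
      dotProduct_add g]
    ring
  have step := riccati_step_complete_square (D₁ := D1 k) (D₂ := D2 k) hK hR hW (hric.W_eq k hk)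
    (hric.P_eq k hk) (hric.K_eq k hk) x u (l k) (K (k + 1) *ᵥ c + g)
  rw [← hric.E_eq k hk] at step
  rw [shift, valueFn, valueFn, valueLin_of_lt hk hK, valueConst_of_lt hk, feedforward,
    controlLin, ← sub_eq_add_neg]
  unfold stageCost
  linear_combination step

lemma tailCost_eq (hric : RiccatiRecursion N A B Q R S K W P E) (hK : ∀ k ≤ N, (K k).IsSymm)
    (hR : ∀ k < N, (R k).IsSymm) {j : ℕ} (hj : j ≤ N) (hW : ∀ k, j ≤ k → k < N → IsUnit (W k))
    (p : ℕ → Fin nx → ℝ) (q : ℕ → Fin nu → ℝ)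
    (hdyn : ∀ k, j ≤ k → k < N → p (k + 1) = A k *ᵥ p k + B k *ᵥ q k + C k *ᵥ l k) :
    ∑ k ∈ Ico j N, stageCost Q R S D1 D2 l k (p k) (q k) + p N ⬝ᵥ Q N *ᵥ p N
      = ∑ k ∈ Ico j N, (q k - (P k *ᵥ p k + feedforward N B C D1 D2 l K W P E k)) ⬝ᵥ W k *ᵥ
            (q k - (P k *ᵥ p k + feedforward N B C D1 D2 l K W P E k))
        + valueFn N B C D1 D2 l K W P E j (p j) := by
  induction hj using Nat.decreasingInduction with
  | self => simp [valueFn, valueLin_self, valueConst_self, hric.terminal]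
  | of_succ k hk ih =>
    rw [sum_eq_sum_Ico_succ_bot hk, sum_eq_sum_Ico_succ_bot hk, add_assoc,
      ih (fun i hi => hW i (by omega)) (fun i hi => hdyn i (by omega)), hdyn k le_rfl hk]
    linarith [hric.stageCost_add_valueFn (C := C) (D1 := D1) (D2 := D2) (l := l) hk (hR k hk)
      (hK (k + 1) hk) (hW k le_rfl hk) (p k) (q k)]

lemma qdpObj_eq (hric : RiccatiRecursion N A B Q R S K W P E) (hK : ∀ k ≤ N, (K k).IsSymm)
    (hR : ∀ k < N, (R k).IsSymm) (hW : ∀ k < N, IsUnit (W k)) {x₀ : Fin nx → ℝ}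
    {p : ℕ → Fin nx → ℝ} {q : ℕ → Fin nu → ℝ} (hf : Feas N A B C x₀ l p q) :
    qdpObj N Q R S D1 D2 l p q
      = ∑ k ∈ range N, (q k - (P k *ᵥ p k + feedforward N B C D1 D2 l K W P E k)) ⬝ᵥ W k *ᵥ
            (q k - (P k *ᵥ p k + feedforward N B C D1 D2 l K W P E k))
        + valueFn N B C D1 D2 l K W P E 0 x₀ := by
  rw [qdpObj, ← hf.1, range_eq_Ico]
  exact hric.tailCost_eq (D1 := D1) (D2 := D2) hK hR (Nat.zero_le N) (fun k _ => hW k) p q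
    (fun k _ => hf.2 k)

lemma dotProduct_W_pos (hric : RiccatiRecursion N A B Q R S K W P E)
    (hK : ∀ k ≤ N, (K k).IsSymm) (hR : ∀ k < N, (R k).IsSymm) (hsosc : SOSC N A B Q R S)
    {j : ℕ} (hj : j < N) (hW : ∀ k, j + 1 ≤ k → k < N → IsUnit (W k))
    {u : Fin nu → ℝ} (hu : u ≠ 0) : 0 < u ⬝ᵥ W j *ᵥ u := by
  set φ : ℕ → (Fin nx → ℝ) → Fin nu → ℝ := fun i x => if i = j then u else P i *ᵥ x
  -- SOSC concerns the problem without disturbances, i.e. with `nd = 0`.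
  set C₀ : ℕ → Matrix (Fin nx) (Fin 0) ℝ := 0
  set p := closedLoop A B C₀ 0 φ 0
  set q := fun i => φ i (p i)
  have hfeas : Feas N A B C₀ 0 0 p q := feas_closedLoop φ 0
  have hp : ∀ i ≤ j, p i = 0 := by
    intro i hi
    induction i with
    | zero => rfl
    | succ i ih =>
      simp [p, closedLoop, φ, show i ≠ j by omega, ih (by omega)]
  have hq : ∀ i < j, q i = 0 := fun i hi => by simp [q, φ, hi.ne, hp i hi.le]
  have hqj : q j = u := if_pos rfl
  have hpj : p (j + 1) = B j *ᵥ u := by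
    simp [p, closedLoop, hp j le_rfl, ← hqj, q]
  have hfeedback : ∀ k, j + 1 ≤ k → q k = P k *ᵥ p k := fun k hk => if_neg (by omega)
  have hcost := hsosc p q hfeas.1 (fun k hk => by simpa using hfeas.2 k hk)
    (fun h => hu (hqj ▸ h.2 j hj))
  have htail := hric.tailCost_eq (D1 := 0) (D2 := 0) hK hR hj hW p q (fun k _ hk => hfeas.2 k hk)
  have hstage : ∀ k x v, stageCost (nd := 0) Q R S 0 0 0 k x v
      = x ⬝ᵥ Q k *ᵥ x + 2 * (v ⬝ᵥ S k *ᵥ x) + v ⬝ᵥ R k *ᵥ v := by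
    simp [stageCost]
  simp only [← hstage] at hcost
  rw [← sum_range_add_sum_Ico _ hj, add_assoc, htail, sum_range_succ,
    sum_eq_zero fun i hi => by
      rw [hp i (mem_range.mp hi).le, hq i (mem_range.mp hi)]; simp [stageCost],
    sum_eq_zero fun k hk => by
      rw [hfeedback k (mem_Ico.mp hk).1]; simp [feedforward, controlLin, valueLin],
    hpj, hp j le_rfl, hqj] at hcost
  have hV : valueFn N B C₀ 0 0 0 K W P E (j + 1) (B j *ᵥ u)
      = u ⬝ᵥ ((B j)ᵀ * K (j + 1) * B j) *ᵥ u := by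
    rw [← mulVec_dotProduct_mulVec_mulVec]
    simp [valueFn, valueLin, valueConst, controlLin]
  rw [hric.W_eq j hj, add_mulVec, dotProduct_add, ← hV]
  simpa [stageCost] using hcost

lemma posDef_W (hric : RiccatiRecursion N A B Q R S K W P E) (hQ : ∀ k ≤ N, (Q k).IsSymm)
    (hR : ∀ k < N, (R k).IsSymm) (hsosc : SOSC N A B Q R S) {k : ℕ} (hk : k < N) :
    (W k).PosDef := by
  have hK : ∀ k ≤ N, (K k).IsSymm := fun k hk => hric.isSymm_K hQ hR hk
  suffices ∀ j ≤ N, ∀ i, j ≤ i → i < N → (W i).PosDef from this k hk.le k le_rfl hk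
  intro j hj
  induction hj using Nat.decreasingInduction with
  | self => intro i h₁ h₂; omega
  | of_succ j hj ih =>
    intro i hji hiN
    rcases hji.eq_or_lt with rfl | hlt
    · refine .of_dotProduct_mulVec_pos ?_ fun x hx => ?_
      · exact isHermitian_iff_isSymm.mpr (hric.isSymm_W hiN (hR _ hiN) (hK _ hiN))
      · simpa using
          hric.dotProduct_W_pos hK hR hsosc hiN (fun k h₁ h₂ => (ih k h₁ h₂).isUnit) hx
    · exact ih i hlt hiN

end RiccatiRecursion

end QDP

theorem qdp_optimal_feedback_general
    (N nx nu nd : ℕ)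
    (A : ℕ → Matrix (Fin nx) (Fin nx) ℝ) (B : ℕ → Matrix (Fin nx) (Fin nu) ℝ)
    (C : ℕ → Matrix (Fin nx) (Fin nd) ℝ)
    (Q : ℕ → Matrix (Fin nx) (Fin nx) ℝ) (R : ℕ → Matrix (Fin nu) (Fin nu) ℝ)
    (S : ℕ → Matrix (Fin nu) (Fin nx) ℝ)
    (D1 : ℕ → Matrix (Fin nd) (Fin nx) ℝ) (D2 : ℕ → Matrix (Fin nd) (Fin nu) ℝ)
    (hQsymm : ∀ k ≤ N, (Q k).IsSymm) (hRsymm : ∀ k < N, (R k).IsSymm)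
    (lm1 : Fin nx → ℝ) (l : ℕ → Fin nd → ℝ)
    (hsosc : SOSC N A B Q R S)
    (K : ℕ → Matrix (Fin nx) (Fin nx) ℝ) (W : ℕ → Matrix (Fin nu) (Fin nu) ℝ)
    (P : ℕ → Matrix (Fin nu) (Fin nx) ℝ) (E : ℕ → Matrix (Fin nx) (Fin nx) ℝ)
    (hKN : K N = Q N)
    (hW : ∀ k < N, W k = R k + (B k)ᵀ * K (k + 1) * B k)
    (hP : ∀ k < N, P k = -((W k)⁻¹ * ((B k)ᵀ * K (k + 1) * A k + S k)))
    (hK : ∀ k < N, K k =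
      Q k + (A k)ᵀ * K (k + 1) * A k
        - ((B k)ᵀ * K (k + 1) * A k + S k)ᵀ * (W k)⁻¹ * ((B k)ᵀ * K (k + 1) * A k + S k))
    (hE : ∀ k < N, E k = A k + B k * P k) :
    ∃ (p : ℕ → Fin nx → ℝ) (q : ℕ → Fin nu → ℝ),
      Feas N A B C lm1 l p q ∧
      (∀ p' q', Feas N A B C lm1 l p' q' →
        qdpObj N Q R S D1 D2 l p q ≤ qdpObj N Q R S D1 D2 l p' q') ∧
      (∀ p' q', Feas N A B C lm1 l p' q' →
        qdpObj N Q R S D1 D2 l p' q' ≤ qdpObj N Q R S D1 D2 l p q →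
        (∀ k ≤ N, p' k = p k) ∧ (∀ k < N, q' k = q k)) ∧
      (∀ k < N, q k =
        P k *ᵥ p k
          + ((W k)⁻¹ * (B k)ᵀ) *ᵥ (∑ i ∈ Ico (k + 1) N, (Mmat D1 D2 P E i (k + 1))ᵀ *ᵥ l i)
          + ((W k)⁻¹ * (B k)ᵀ) *ᵥ (∑ i ∈ Ico (k + 1) N, ((Vmat K E i (k + 1))ᵀ * C i) *ᵥ l i)
          - ((W k)⁻¹ * (B k)ᵀ * K (k + 1) * C k) *ᵥ l k
          - ((W k)⁻¹ * (D2 k)ᵀ) *ᵥ l k) := by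
  have hric : RiccatiRecursion N A B Q R S K W P E := ⟨hKN, hW, hP, hK, hE⟩
  have hWpd : ∀ k ∈ range N, (W k).PosDef := fun k hk =>
    hric.posDef_W hQsymm hRsymm hsosc (mem_range.mp hk)
  have hcost := fun {p q} (hf : Feas N A B C lm1 l p q) =>
    hric.qdpObj_eq (D1 := D1) (D2 := D2) (fun k hk => hric.isSymm_K hQsymm hRsymm hk) hRsymm
      (fun k hk => (hWpd k (mem_range.mpr hk)).isUnit) hf
  set φ := fun k x => P k *ᵥ x + feedforward N B C D1 D2 l K W P E k
  set p := closedLoop A B C l φ lm1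
  have hfeas : Feas N A B C lm1 l p (fun k => φ k (p k)) := feas_closedLoop φ lm1
  have hopt : qdpObj N Q R S D1 D2 l p (fun k => φ k (p k))
      = valueFn N B C D1 D2 l K W P E 0 lm1 := by
    simp [hcost hfeas, φ]
  refine ⟨p, fun k => φ k (p k), hfeas, fun p' q' hf => ?_, fun p' q' hf hle => ?_,
    fun k _ => by simp only [φ, feedforward_eq]; abel⟩
  · rw [hopt, hcost hf]
    exact le_add_of_nonneg_left
      (sum_dotProduct_mulVec_nonneg (fun k hk => (hWpd k hk).posSemidef) _)
  · rw [hopt, hcost hf, add_le_iff_nonpos_left] at hle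
    have hres := (sum_dotProduct_mulVec_eq_zero_iff hWpd _).mp
      (hle.antisymm (sum_dotProduct_mulVec_nonneg (fun k hk => (hWpd k hk).posSemidef) _))
    have hq' : ∀ k < N, q' k = φ k (p' k) := fun k hk =>
      sub_eq_zero.mp (hres k (mem_range.mpr hk))
    have hp' := hf.eq_closedLoop hq'
    exact ⟨hp', fun k hk => by rw [hq' k hk, hp' k hk.le]⟩

/-- **Optimal feedback law for the QDP (Lemma 3.4(ii)).**  Under SOSC the QDP has a
unique global minimizer `(p*, q*)`, whose controls are given by the Riccati feedback
formula. -/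
theorem qdp_optimal_feedback
    (N nx nu nd : ℕ) (hN : 1 ≤ N) (hnx : 1 ≤ nx) (hnu : 1 ≤ nu) (hnd : 1 ≤ nd)
    (A : ℕ → Matrix (Fin nx) (Fin nx) ℝ) (B : ℕ → Matrix (Fin nx) (Fin nu) ℝ)
    (C : ℕ → Matrix (Fin nx) (Fin nd) ℝ)
    (Q : ℕ → Matrix (Fin nx) (Fin nx) ℝ) (R : ℕ → Matrix (Fin nu) (Fin nu) ℝ)
    (S : ℕ → Matrix (Fin nu) (Fin nx) ℝ)
    (D1 : ℕ → Matrix (Fin nd) (Fin nx) ℝ) (D2 : ℕ → Matrix (Fin nd) (Fin nu) ℝ)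
    (hQsymm : ∀ k ≤ N, (Q k).IsSymm) (hRsymm : ∀ k < N, (R k).IsSymm)
    (lm1 : Fin nx → ℝ) (l : ℕ → Fin nd → ℝ)
    (hsosc : SOSC N A B Q R S)
    (K : ℕ → Matrix (Fin nx) (Fin nx) ℝ) (W : ℕ → Matrix (Fin nu) (Fin nu) ℝ)
    (P : ℕ → Matrix (Fin nu) (Fin nx) ℝ) (E : ℕ → Matrix (Fin nx) (Fin nx) ℝ)
    (hKN : K N = Q N)
    (hW : ∀ k < N, W k = R k + (B k)ᵀ * K (k + 1) * B k)
    (hP : ∀ k < N, P k = -((W k)⁻¹ * ((B k)ᵀ * K (k + 1) * A k + S k)))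
    (hK : ∀ k < N, K k =
      Q k + (A k)ᵀ * K (k + 1) * A k
        - ((B k)ᵀ * K (k + 1) * A k + S k)ᵀ * (W k)⁻¹ * ((B k)ᵀ * K (k + 1) * A k + S k))
    (hE : ∀ k < N, E k = A k + B k * P k) :
    ∃ (p : ℕ → Fin nx → ℝ) (q : ℕ → Fin nu → ℝ),
      Feas N A B C lm1 l p q ∧
      (∀ p' q', Feas N A B C lm1 l p' q' →
        qdpObj N Q R S D1 D2 l p q ≤ qdpObj N Q R S D1 D2 l p' q') ∧
      (∀ p' q', Feas N A B C lm1 l p' q' →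
        qdpObj N Q R S D1 D2 l p' q' ≤ qdpObj N Q R S D1 D2 l p q →
        (∀ k ≤ N, p' k = p k) ∧ (∀ k < N, q' k = q k)) ∧
      (∀ k < N, q k =
        P k *ᵥ p k
          + ((W k)⁻¹ * (B k)ᵀ) *ᵥ (∑ i ∈ Ico (k + 1) N, (Mmat D1 D2 P E i (k + 1))ᵀ *ᵥ l i)
          + ((W k)⁻¹ * (B k)ᵀ) *ᵥ (∑ i ∈ Ico (k + 1) N, ((Vmat K E i (k + 1))ᵀ * C i) *ᵥ l i)
          - ((W k)⁻¹ * (B k)ᵀ * K (k + 1) * C k) *ᵥ l k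
          - ((W k)⁻¹ * (D2 k)ᵀ) *ᵥ l k) :=
  qdp_optimal_feedback_general N nx nu nd A B C Q R S D1 D2 hQsymm hRsymm lm1 l hsosc K W P E hKN hW
    hP hK hE
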